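/- The rule Repl is admissible in G3c^=⁻: for every atomic formula P, terms s and r, variable v not occurring in s or r, and finite multisets Γ, Δ of formulas, if the sequent s = r, P[v/s], P[v/r], Γ ⇒ Δ is derivable in G3c^=⁻, then the sequent s = r, P[v/s], Γ ⇒ Δ is derivable in G3c^=⁻. -/

import Mathlib

open FirstOrder Language Multiset

universe u v

variable {L : FirstOrder.Language.{u, v}}

/-- Number of occurrences of the variable `v` in a term. -/
def tCount (v : ℕ) : L.Term ℕ → ℕ
  | .var w => if w = v then 1 else 0
  | .func _ ts => Finset.univ.sum fun i => tCount v (ts i)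

/-- First-order formulas over the language `L` (with built-in equality),
with natural numbers as variables. -/
inductive Fm (L : FirstOrder.Language.{u, v}) : Type (max u v) where
  | falsum : Fm L
  | equal : L.Term ℕ → L.Term ℕ → Fm L
  | rel {l : ℕ} : L.Relations l → (Fin l → L.Term ℕ) → Fm L
  | and : Fm L → Fm L → Fm L
  | or : Fm L → Fm L → Fm L
  | imp : Fm L → Fm L → Fm L
  | all : ℕ → Fm L → Fm L
  | ex : ℕ → Fm L → Fm L

namespace Fm

/-- Atomic formulas: equalities and relational atoms. -/
inductive IsAtomic : Fm L → Prop where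
  | equal (t₁ t₂ : L.Term ℕ) : (Fm.equal t₁ t₂).IsAtomic
  | rel {l : ℕ} (R : L.Relations l) (ts : Fin l → L.Term ℕ) : (Fm.rel R ts).IsAtomic

/-- Number of free occurrences of the variable `v` in a formula. -/
def fCount (v : ℕ) : Fm L → ℕ
  | falsum => 0
  | equal t₁ t₂ => tCount v t₁ + tCount v t₂
  | rel _ ts => Finset.univ.sum fun i => tCount v (ts i)
  | and A B => fCount v A + fCount v B
  | or A B => fCount v A + fCount v B
  | imp A B => fCount v A + fCount v B
  | all y A => if y = v then 0 else fCount v A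
  | ex y A => if y = v then 0 else fCount v A

/-- The set of free variables of a formula. -/
def freeVars : Fm L → Set ℕ
  | falsum => ∅
  | equal t₁ t₂ => {w | tCount w t₁ ≠ 0 ∨ tCount w t₂ ≠ 0}
  | rel _ ts => {w | ∃ i, tCount w (ts i) ≠ 0}
  | and A B => A.freeVars ∪ B.freeVars
  | or A B => A.freeVars ∪ B.freeVars
  | imp A B => A.freeVars ∪ B.freeVars
  | all y A => A.freeVars \ {y}
  | ex y A => A.freeVars \ {y}

/-- Simultaneous substitution of terms for the free variables of a formula. -/
def ssub (σ : ℕ → L.Term ℕ) : Fm L → Fm L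
  | falsum => falsum
  | equal t₁ t₂ => equal (t₁.subst σ) (t₂.subst σ)
  | rel R ts => rel R fun i => (ts i).subst σ
  | and A B => and (A.ssub σ) (B.ssub σ)
  | or A B => or (A.ssub σ) (B.ssub σ)
  | imp A B => imp (A.ssub σ) (B.ssub σ)
  | all y A => all y (A.ssub (Function.update σ y (Term.var y)))
  | ex y A => ex y (A.ssub (Function.update σ y (Term.var y)))

/-- `A.subst v t` is `A[v/t]`, the substitution of the term `t`
for the variable `v` in `A`. -/
def subst (v : ℕ) (t : L.Term ℕ) (A : Fm L) : Fm L :=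
  A.ssub (Function.update (Term.var : ℕ → L.Term ℕ) v t)

/-- `t` is free for `x` in `A` (no free occurrence of `x` lies in the scope of a
quantifier binding a variable of `t`). -/
def freeFor (t : L.Term ℕ) (x : ℕ) : Fm L → Prop
  | falsum => True
  | equal _ _ => True
  | rel _ _ => True
  | and A B => freeFor t x A ∧ freeFor t x B
  | or A B => freeFor t x A ∧ freeFor t x B
  | imp A B => freeFor t x A ∧ freeFor t x B
  | all y A => x = y ∨ x ∉ A.freeVars ∨ (tCount y t = 0 ∧ freeFor t x A)
  | ex y A => x = y ∨ x ∉ A.freeVars ∨ (tCount y t = 0 ∧ freeFor t x A)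

end Fm

/-- The rule Repl, given as the relation between the antecedent of the premiss and the
antecedent of the conclusion (the succedent is unchanged): from
`s = r, P[v/s], P[v/r], Γ ⇒ Δ` infer `s = r, P[v/s], Γ ⇒ Δ`, for `P` atomic and
`v` not occurring in `s, r`. -/
def ReplFull (L : FirstOrder.Language.{u, v}) : Multiset (Fm L) → Multiset (Fm L) → Prop := fun Γp Γc =>
  ∃ (s r : L.Term ℕ) (v : ℕ) (P : Fm L) (Γ : Multiset (Fm L)),
    P.IsAtomic ∧ tCount v s = 0 ∧ tCount v r = 0 ∧
    Γp = Fm.equal s r ::ₘ P.subst v s ::ₘ P.subst v r ::ₘ Γ ∧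
    Γc = Fm.equal s r ::ₘ P.subst v s ::ₘ Γ

/-- The rule Repl⁻: from `s = r, P[v/r], Γ ⇒ Δ` infer `s = r, P[v/s], Γ ⇒ Δ`,
for `P` atomic and `v` not occurring in `s, r`. -/
def ReplMinus (L : FirstOrder.Language.{u, v}) : Multiset (Fm L) → Multiset (Fm L) → Prop := fun Γp Γc =>
  ∃ (s r : L.Term ℕ) (v : ℕ) (P : Fm L) (Γ : Multiset (Fm L)),
    P.IsAtomic ∧ tCount v s = 0 ∧ tCount v r = 0 ∧
    Γp = Fm.equal s r ::ₘ P.subst v r ::ₘ Γ ∧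
    Γc = Fm.equal s r ::ₘ P.subst v s ::ₘ Γ

/-- The rule Repl₁⁻: Repl⁻ restricted to atomic `P` with exactly one occurrence of `v`. -/
def ReplMinus1 (L : FirstOrder.Language.{u, v}) : Multiset (Fm L) → Multiset (Fm L) → Prop := fun Γp Γc =>
  ∃ (s r : L.Term ℕ) (v : ℕ) (P : Fm L) (Γ : Multiset (Fm L)),
    P.IsAtomic ∧ tCount v s = 0 ∧ tCount v r = 0 ∧ Fm.fCount v P = 1 ∧
    Γp = Fm.equal s r ::ₘ P.subst v r ::ₘ Γ ∧
    Γc = Fm.equal s r ::ₘ P.subst v s ::ₘ Γ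

/-- `DerC rp n Γ Δ`: the sequent `Γ ⇒ Δ` has a derivation of height at most `n` in the
classical multisuccedent G3 calculus `G3c` with the equality rule Ref and the
replacement rule given by `rp` (e.g. `ReplFull L` for `G3c^=`, `ReplMinus L` for `G3c^=⁻`,
`ReplMinus1 L` for `G3c₁^=⁻`). -/
inductive DerC (rp : Multiset (Fm L) → Multiset (Fm L) → Prop) :
    ℕ → Multiset (Fm L) → Multiset (Fm L) → Prop where
  | ax {n : ℕ} {Γ Δ : Multiset (Fm L)} {P : Fm L} (hP : P.IsAtomic) :
      DerC rp n (P ::ₘ Γ) (P ::ₘ Δ)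
  | botL {n : ℕ} {Γ Δ : Multiset (Fm L)} : DerC rp n (Fm.falsum ::ₘ Γ) Δ
  | andL {n : ℕ} {Γ Δ : Multiset (Fm L)} {A B : Fm L} :
      DerC rp n (A ::ₘ B ::ₘ Γ) Δ → DerC rp (n + 1) (Fm.and A B ::ₘ Γ) Δ
  | andR {n : ℕ} {Γ Δ : Multiset (Fm L)} {A B : Fm L} :
      DerC rp n Γ (A ::ₘ Δ) → DerC rp n Γ (B ::ₘ Δ) → DerC rp (n + 1) Γ (Fm.and A B ::ₘ Δ)
  | orL {n : ℕ} {Γ Δ : Multiset (Fm L)} {A B : Fm L} :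
      DerC rp n (A ::ₘ Γ) Δ → DerC rp n (B ::ₘ Γ) Δ → DerC rp (n + 1) (Fm.or A B ::ₘ Γ) Δ
  | orR {n : ℕ} {Γ Δ : Multiset (Fm L)} {A B : Fm L} :
      DerC rp n Γ (A ::ₘ B ::ₘ Δ) → DerC rp (n + 1) Γ (Fm.or A B ::ₘ Δ)
  | impL {n : ℕ} {Γ Δ : Multiset (Fm L)} {A B : Fm L} :
      DerC rp n Γ (A ::ₘ Δ) → DerC rp n (B ::ₘ Γ) Δ → DerC rp (n + 1) (Fm.imp A B ::ₘ Γ) Δ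
  | impR {n : ℕ} {Γ Δ : Multiset (Fm L)} {A B : Fm L} :
      DerC rp n (A ::ₘ Γ) (B ::ₘ Δ) → DerC rp (n + 1) Γ (Fm.imp A B ::ₘ Δ)
  | allL {n : ℕ} {Γ Δ : Multiset (Fm L)} {x : ℕ} {t : L.Term ℕ} {A : Fm L}
      (hf : Fm.freeFor t x A) :
      DerC rp n (A.subst x t ::ₘ Fm.all x A ::ₘ Γ) Δ → DerC rp (n + 1) (Fm.all x A ::ₘ Γ) Δ
  | allR {n : ℕ} {Γ Δ : Multiset (Fm L)} {x y : ℕ} {A : Fm L}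
      (hf : Fm.freeFor (Term.var y) x A) (hy : y ∉ (Fm.all x A).freeVars)
      (hΓ : ∀ C ∈ Γ, y ∉ Fm.freeVars C) (hΔ : ∀ C ∈ Δ, y ∉ Fm.freeVars C) :
      DerC rp n Γ (A.subst x (Term.var y) ::ₘ Δ) → DerC rp (n + 1) Γ (Fm.all x A ::ₘ Δ)
  | exL {n : ℕ} {Γ Δ : Multiset (Fm L)} {x y : ℕ} {A : Fm L}
      (hf : Fm.freeFor (Term.var y) x A) (hy : y ∉ (Fm.ex x A).freeVars)
      (hΓ : ∀ C ∈ Γ, y ∉ Fm.freeVars C) (hΔ : ∀ C ∈ Δ, y ∉ Fm.freeVars C) :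
      DerC rp n (A.subst x (Term.var y) ::ₘ Γ) Δ → DerC rp (n + 1) (Fm.ex x A ::ₘ Γ) Δ
  | exR {n : ℕ} {Γ Δ : Multiset (Fm L)} {x : ℕ} {t : L.Term ℕ} {A : Fm L}
      (hf : Fm.freeFor t x A) :
      DerC rp n Γ (A.subst x t ::ₘ Fm.ex x A ::ₘ Δ) → DerC rp (n + 1) Γ (Fm.ex x A ::ₘ Δ)
  | ref {n : ℕ} {Γ Δ : Multiset (Fm L)} (t : L.Term ℕ) :
      DerC rp n (Fm.equal t t ::ₘ Γ) Δ → DerC rp (n + 1) Γ Δ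
  | repl {n : ℕ} {Γp Γc Δ : Multiset (Fm L)} (h : rp Γp Γc) :
      DerC rp n Γp Δ → DerC rp (n + 1) Γc Δ

/-- `DerI rp n Γ Δ`: the sequent `Γ ⇒ Δ` has a derivation of height at most `n` in the
intuitionistic multisuccedent G3 calculus (the right rules for `→` and `∀` have
single-succedent premisses, and L→ repeats its principal formula) with the equality rule
Ref and the replacement rule given by `rp`. -/
inductive DerI (rp : Multiset (Fm L) → Multiset (Fm L) → Prop) :
    ℕ → Multiset (Fm L) → Multiset (Fm L) → Prop where
  | ax {n : ℕ} {Γ Δ : Multiset (Fm L)} {P : Fm L} (hP : P.IsAtomic) :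
      DerI rp n (P ::ₘ Γ) (P ::ₘ Δ)
  | botL {n : ℕ} {Γ Δ : Multiset (Fm L)} : DerI rp n (Fm.falsum ::ₘ Γ) Δ
  | andL {n : ℕ} {Γ Δ : Multiset (Fm L)} {A B : Fm L} :
      DerI rp n (A ::ₘ B ::ₘ Γ) Δ → DerI rp (n + 1) (Fm.and A B ::ₘ Γ) Δ
  | andR {n : ℕ} {Γ Δ : Multiset (Fm L)} {A B : Fm L} :
      DerI rp n Γ (A ::ₘ Δ) → DerI rp n Γ (B ::ₘ Δ) → DerI rp (n + 1) Γ (Fm.and A B ::ₘ Δ)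
  | orL {n : ℕ} {Γ Δ : Multiset (Fm L)} {A B : Fm L} :
      DerI rp n (A ::ₘ Γ) Δ → DerI rp n (B ::ₘ Γ) Δ → DerI rp (n + 1) (Fm.or A B ::ₘ Γ) Δ
  | orR {n : ℕ} {Γ Δ : Multiset (Fm L)} {A B : Fm L} :
      DerI rp n Γ (A ::ₘ B ::ₘ Δ) → DerI rp (n + 1) Γ (Fm.or A B ::ₘ Δ)
  | impL {n : ℕ} {Γ Δ : Multiset (Fm L)} {A B : Fm L} :
      DerI rp n (Fm.imp A B ::ₘ Γ) (A ::ₘ Δ) → DerI rp n (B ::ₘ Γ) Δ →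
      DerI rp (n + 1) (Fm.imp A B ::ₘ Γ) Δ
  | impR {n : ℕ} {Γ Δ : Multiset (Fm L)} {A B : Fm L} :
      DerI rp n (A ::ₘ Γ) {B} → DerI rp (n + 1) Γ (Fm.imp A B ::ₘ Δ)
  | allL {n : ℕ} {Γ Δ : Multiset (Fm L)} {x : ℕ} {t : L.Term ℕ} {A : Fm L}
      (hf : Fm.freeFor t x A) :
      DerI rp n (A.subst x t ::ₘ Fm.all x A ::ₘ Γ) Δ → DerI rp (n + 1) (Fm.all x A ::ₘ Γ) Δ
  | allR {n : ℕ} {Γ Δ : Multiset (Fm L)} {x y : ℕ} {A : Fm L}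
      (hf : Fm.freeFor (Term.var y) x A) (hy : y ∉ (Fm.all x A).freeVars)
      (hΓ : ∀ C ∈ Γ, y ∉ Fm.freeVars C) :
      DerI rp n Γ {A.subst x (Term.var y)} → DerI rp (n + 1) Γ (Fm.all x A ::ₘ Δ)
  | exL {n : ℕ} {Γ Δ : Multiset (Fm L)} {x y : ℕ} {A : Fm L}
      (hf : Fm.freeFor (Term.var y) x A) (hy : y ∉ (Fm.ex x A).freeVars)
      (hΓ : ∀ C ∈ Γ, y ∉ Fm.freeVars C) (hΔ : ∀ C ∈ Δ, y ∉ Fm.freeVars C) :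
      DerI rp n (A.subst x (Term.var y) ::ₘ Γ) Δ → DerI rp (n + 1) (Fm.ex x A ::ₘ Γ) Δ
  | exR {n : ℕ} {Γ Δ : Multiset (Fm L)} {x : ℕ} {t : L.Term ℕ} {A : Fm L}
      (hf : Fm.freeFor t x A) :
      DerI rp n Γ (A.subst x t ::ₘ Fm.ex x A ::ₘ Δ) → DerI rp (n + 1) Γ (Fm.ex x A ::ₘ Δ)
  | ref {n : ℕ} {Γ Δ : Multiset (Fm L)} (t : L.Term ℕ) :
      DerI rp n (Fm.equal t t ::ₘ Γ) Δ → DerI rp (n + 1) Γ Δ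
  | repl {n : ℕ} {Γp Γc Δ : Multiset (Fm L)} (h : rp Γp Γc) :
      DerI rp n Γp Δ → DerI rp (n + 1) Γc Δ


/-!
Repl differs from Repl⁻ only in keeping `P[v/s]` beside `P[v/r]`, so it suffices to contract
`P[v/r]` into `P[v/s]` throughout a derivation. More generally, a derivation of `Θ ⇒ Δ`
yields one of `Θ' ⇒ Δ` whenever every formula of `Θ` arises from a formula of `Θ'` by a chain
of Repl⁻-rewrites, one-to-one except for atoms, which may be contracted. Compound formulas only
rewrite to themselves, so the left rules transfer literally; a Repl⁻ step merely lengthens a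
chain; and at an axiom the chain is replayed upwards with Repl⁻, its equalities being introduced
by weakening and removed again by contracting duplicate equalities, which Ref and Repl⁻ provide.
Weakening is needed only by formulas whose variables occur in atoms of the antecedent, and for
those it preserves the eigenvariable conditions.
-/

theorem Multiset.cons_cons_eq_cons_iff {α : Type*} {a b : α} {s t : Multiset α} :
    a ::ₘ b ::ₘ s = b ::ₘ t ↔ a ::ₘ s = t := by
  rw [cons_swap, cons_inj_right]

theorem finite_setOf_tCount_ne_zero (t : L.Term ℕ) : {z | tCount z t ≠ 0}.Finite := by
  induction t with
  | var w =>
    refine (Set.finite_singleton w).subset fun z hz => ?_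
    by_contra h
    exact hz (if_neg (Ne.symm h))
  | func f ts ih =>
    refine (Set.finite_iUnion ih).subset fun z hz => ?_
    obtain ⟨i, -, hi⟩ := Finset.exists_ne_zero_of_sum_ne_zero hz
    exact Set.mem_iUnion.mpr ⟨i, hi⟩

theorem exists_tCount_eq_zero (s r : L.Term ℕ) : ∃ z, tCount z s = 0 ∧ tCount z r = 0 := by
  obtain ⟨z, hz⟩ := ((finite_setOf_tCount_ne_zero s).union
    (finite_setOf_tCount_ne_zero r)).infinite_compl.nonempty
  exact ⟨z, by simpa [not_or] using hz⟩

theorem subst_update_of_tCount_eq_zero {z : ℕ} {u t : L.Term ℕ} (h : tCount z t = 0) :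
    t.subst (Function.update Term.var z u) = t := by
  induction t with
  | var w =>
    have hw : w ≠ z := fun hwz => by simp [tCount, hwz] at h
    simp [Term.subst, Function.update_of_ne hw]
  | func f ts ih =>
    simp only [tCount, Finset.sum_eq_zero_iff, Finset.mem_univ, true_implies] at h
    simp only [Term.subst, ih _ (h _)]

theorem tCount_subst_update_ne_zero {z v : ℕ} {a b t : L.Term ℕ}
    (h : tCount z (t.subst (Function.update Term.var v b)) ≠ 0) :
    tCount z (t.subst (Function.update Term.var v a)) ≠ 0 ∨ tCount z b ≠ 0 := by
  induction t with
  | var w =>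
    rcases eq_or_ne w v with rfl | hw <;> simp_all [Term.subst]
  | func f ts ih =>
    obtain ⟨i, -, hi⟩ := Finset.exists_ne_zero_of_sum_ne_zero h
    refine (ih i hi).imp_left fun hi' hsum => hi' ?_
    exact Finset.sum_eq_zero_iff.mp hsum i (Finset.mem_univ i)

namespace Fm

theorem IsAtomic.subst {P : Fm L} (hP : P.IsAtomic) (v : ℕ) (t : L.Term ℕ) :
    (P.subst v t).IsAtomic := by
  cases hP
  · exact .equal _ _
  · exact .rel _ _

theorem freeVars_subst_subset {P : Fm L} (hP : P.IsAtomic) (v : ℕ) (a b : L.Term ℕ) :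
    (P.subst v b).freeVars ⊆ (P.subst v a).freeVars ∪ {z | tCount z b ≠ 0} := by
  intro z hz
  cases hP with
  | equal t₁ t₂ =>
    rcases hz with h | h
    · exact (tCount_subst_update_ne_zero h).imp_left Or.inl
    · exact (tCount_subst_update_ne_zero h).imp_left Or.inr
  | rel R ts =>
    obtain ⟨i, hi⟩ := hz
    exact (tCount_subst_update_ne_zero hi).imp_left fun h => ⟨i, h⟩

theorem exists_subst_eq_equal {P : Fm L} {v : ℕ} {a b : L.Term ℕ}
    (h : ∃ s r, P.subst v b = equal s r) : ∃ s r, P.subst v a = equal s r := by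
  cases P <;> simp_all [subst, ssub]

end Fm

open Fm

section AtomVariables

/-- Going upwards, the variables of atoms in the antecedent stay there (Repl⁻ keeps `s = r`),
which is what makes weakening by formulas over these variables harmless. -/
def fvAtoms (Γ : Multiset (Fm L)) : Set ℕ := {z | ∃ C ∈ Γ, C.IsAtomic ∧ z ∈ C.freeVars}

variable {Γ Γ' : Multiset (Fm L)} {C : Fm L}

theorem fvAtoms_mono (h : Γ ≤ Γ') : fvAtoms Γ ⊆ fvAtoms Γ' :=
  fun _ ⟨D, hD, hA, hz⟩ => ⟨D, mem_of_le h hD, hA, hz⟩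

theorem fvAtoms_subset_cons : fvAtoms Γ ⊆ fvAtoms (C ::ₘ Γ) :=
  fvAtoms_mono (le_cons_self _ _)

theorem fvAtoms_cons_of_not_isAtomic (hC : ¬ C.IsAtomic) : fvAtoms (C ::ₘ Γ) = fvAtoms Γ := by
  refine subset_antisymm (fun z ⟨D, hD, hA, hz⟩ => ⟨D, ?_, hA, hz⟩) fvAtoms_subset_cons
  exact (mem_cons.mp hD).resolve_left fun h => hC (h ▸ hA)

theorem freeVars_subset_fvAtoms (hC : C ∈ Γ) (hA : C.IsAtomic) : C.freeVars ⊆ fvAtoms Γ :=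
  fun _ hz => ⟨C, hC, hA, hz⟩

theorem notMem_fvAtoms {y : ℕ} (h : ∀ C ∈ Γ, y ∉ C.freeVars) : y ∉ fvAtoms Γ :=
  fun ⟨C, hC, _, hy⟩ => h C hC hy

theorem freeVars_subst_subset_union_fvAtoms {P : Fm L} (hP : P.IsAtomic) {v : ℕ}
    {s r : L.Term ℕ} : (P.subst v s).freeVars ⊆
      (P.subst v r).freeVars ∪ fvAtoms (equal s r ::ₘ Γ) := by
  refine (freeVars_subst_subset hP v r s).trans (Set.union_subset_union_right _ ?_)
  exact fun z hz => ⟨_, mem_cons_self _ _, .equal s r, Or.inl hz⟩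

theorem fvAtoms_replMinus_subset {P : Fm L} (hP : P.IsAtomic) {v : ℕ} {s r : L.Term ℕ} :
    fvAtoms (equal s r ::ₘ P.subst v s ::ₘ Γ) ⊆
      fvAtoms (equal s r ::ₘ P.subst v r ::ₘ Γ) := by
  rintro z ⟨C, hC, hA, hz⟩
  rcases mem_cons.mp hC with rfl | hC
  · exact ⟨_, mem_cons_self _ _, hA, hz⟩
  rcases mem_cons.mp hC with rfl | hC
  · rcases freeVars_subst_subset_union_fvAtoms hP hz with hz | hz
    · exact ⟨_, mem_cons_of_mem (mem_cons_self _ _), hP.subst v r, hz⟩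
    · exact fvAtoms_mono (cons_le_cons _ (le_cons_self _ _)) hz
  · exact ⟨C, mem_cons_of_mem (mem_cons_of_mem hC), hA, hz⟩

end AtomVariables

section Derivations

variable {rp : Multiset (Fm L) → Multiset (Fm L) → Prop} {n m : ℕ} {Γ Δ : Multiset (Fm L)}

theorem DerC.succ (h : DerC rp n Γ Δ) : DerC rp (n + 1) Γ Δ := by
  induction h with
  | ax hP => exact .ax hP
  | botL => exact .botL
  | andL _ ih => exact .andL ih
  | andR _ _ ih₁ ih₂ => exact .andR ih₁ ih₂
  | orL _ _ ih₁ ih₂ => exact .orL ih₁ ih₂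
  | orR _ ih => exact .orR ih
  | impL _ _ ih₁ ih₂ => exact .impL ih₁ ih₂
  | impR _ ih => exact .impR ih
  | allL hf _ ih => exact .allL hf ih
  | allR hf hy hΓ hΔ _ ih => exact .allR hf hy hΓ hΔ ih
  | exL hf hy hΓ hΔ _ ih => exact .exL hf hy hΓ hΔ ih
  | exR hf _ ih => exact .exR hf ih
  | ref t _ ih => exact .ref t ih
  | repl h _ ih => exact .repl h ih

theorem DerC.mono (h : DerC rp n Γ Δ) (hnm : n ≤ m) : DerC rp m Γ Δ := by
  induction hnm with
  | refl => exact h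
  | step _ ih => exact ih.succ

abbrev Derivable (Γ Δ : Multiset (Fm L)) : Prop := ∃ n, DerC (ReplMinus L) n Γ Δ

theorem DerC.weaken (d : DerC (ReplMinus L) n Γ Δ) {W : Fm L} (hW : W.freeVars ⊆ fvAtoms Γ) :
    DerC (ReplMinus L) n (W ::ₘ Γ) Δ := by
  induction d generalizing W with
  | ax hP => rw [cons_swap]; exact .ax hP
  | botL => rw [cons_swap]; exact .botL
  | @andL _ _ _ A B _ ih =>
    rw [fvAtoms_cons_of_not_isAtomic (C := Fm.and A B) (nomatch ·)] at hW
    have d := ih (hW.trans (fvAtoms_subset_cons.trans fvAtoms_subset_cons))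
    rw [cons_swap W A, cons_swap W B] at d
    rw [cons_swap]; exact .andL d
  | andR _ _ ih₁ ih₂ => exact .andR (ih₁ hW) (ih₂ hW)
  | @orL _ _ _ A B _ _ ih₁ ih₂ =>
    rw [fvAtoms_cons_of_not_isAtomic (C := Fm.or A B) (nomatch ·)] at hW
    have d₁ := ih₁ (hW.trans fvAtoms_subset_cons)
    have d₂ := ih₂ (hW.trans fvAtoms_subset_cons)
    rw [cons_swap W A] at d₁; rw [cons_swap W B] at d₂
    rw [cons_swap]; exact .orL d₁ d₂
  | orR _ ih => exact .orR (ih hW)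
  | @impL _ _ _ A B _ _ ih₁ ih₂ =>
    rw [fvAtoms_cons_of_not_isAtomic (C := Fm.imp A B) (nomatch ·)] at hW
    have d₂ := ih₂ (hW.trans fvAtoms_subset_cons)
    rw [cons_swap W B] at d₂
    rw [cons_swap]; exact .impL (ih₁ hW) d₂
  | @impR _ _ _ A B _ ih =>
    have d := ih (hW.trans fvAtoms_subset_cons)
    rw [cons_swap W A] at d
    exact .impR d
  | allL hf _ ih =>
    have d := ih (hW.trans fvAtoms_subset_cons)
    rw [cons_swap W, cons_swap W] at d
    rw [cons_swap]; exact .allL hf d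
  | allR hf hy hΓ hΔ _ ih =>
    refine .allR hf hy (forall_mem_cons.mpr ⟨fun h => notMem_fvAtoms hΓ (hW h), hΓ⟩) hΔ ?_
    exact ih hW
  | @exL _ _ _ x y A hf hy hΓ hΔ _ ih =>
    rw [fvAtoms_cons_of_not_isAtomic (C := Fm.ex x A) (nomatch ·)] at hW
    have d := ih (hW.trans fvAtoms_subset_cons)
    rw [cons_swap W] at d
    rw [cons_swap]
    exact .exL hf hy (forall_mem_cons.mpr ⟨fun h => notMem_fvAtoms hΓ (hW h), hΓ⟩) hΔ d
  | exR hf _ ih => exact .exR hf (ih hW)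
  | ref t _ ih =>
    have d := ih (hW.trans fvAtoms_subset_cons)
    rw [cons_swap W] at d
    exact .ref t d
  | repl hrp _ ih =>
    obtain ⟨s, r, v, P, Γ₀, hP, hs, hr, rfl, rfl⟩ := hrp
    have d := ih (hW.trans (fvAtoms_replMinus_subset hP))
    rw [cons_swap W, cons_swap W] at d
    rw [cons_swap W, cons_swap W]
    exact .repl ⟨s, r, v, P, W ::ₘ Γ₀, hP, hs, hr, rfl, rfl⟩ d

theorem Derivable.of_cons_equal {s r : L.Term ℕ} (hmem : equal s r ∈ Γ)
    (h : Derivable (equal s r ::ₘ Γ) Δ) : Derivable Γ Δ := by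
  obtain ⟨n, d⟩ := h
  obtain ⟨z, hzs, hzr⟩ := exists_tCount_eq_zero s r
  obtain ⟨Γ₀, rfl⟩ := exists_cons_of_mem hmem
  have hsubst : ∀ t, (equal s (Term.var z) : Fm L).subst z t = equal s t := fun t => by
    simp [Fm.subst, ssub, subst_update_of_tCount_eq_zero hzs, Term.subst]
  -- Repl⁻ with `P := (s = z)` turns the second copy of `s = r` into `s = s`, which Ref removes.
  have hrepl :
      ReplMinus L (equal s r ::ₘ equal s r ::ₘ Γ₀) (equal s r ::ₘ equal s s ::ₘ Γ₀) :=
    ⟨s, r, z, equal s (Term.var z), Γ₀, .equal _ _, hzs, hzr, by rw [hsubst], by rw [hsubst]⟩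
  exact ⟨n + 2, .ref s (by rw [cons_swap]; exact .repl hrepl d)⟩

end Derivations

/-- `Y` arises from `X` by replacements `P[v/a] ↦ P[v/b]`, each justified by an equality `a = b`
that itself arises in this way from a member of `Θ`. -/
inductive Rewrites (Θ : Multiset (Fm L)) : Fm L → Fm L → Prop where
  | refl (X : Fm L) : Rewrites Θ X X
  | step {X P E : Fm L} {v : ℕ} {a b : L.Term ℕ} :
      Rewrites Θ X (P.subst v a) → P.IsAtomic → tCount v a = 0 → tCount v b = 0 →
      E ∈ Θ → Rewrites Θ E (equal a b) → Rewrites Θ X (P.subst v b)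

namespace Rewrites

variable {Θ Θ' : Multiset (Fm L)} {X Y : Fm L}

theorem mono (hΘ : Θ ≤ Θ') (h : Rewrites Θ X Y) : Rewrites Θ' X Y := by
  induction h with
  | refl X => exact .refl X
  | step _ hP ha hb hE _ ih ihE => exact .step ih hP ha hb (mem_of_le hΘ hE) ihE

theorem eq_or_isAtomic (h : Rewrites Θ X Y) : X = Y ∨ X.IsAtomic ∧ Y.IsAtomic := by
  induction h with
  | refl X => exact .inl rfl
  | step _ hP _ _ _ _ ih =>
    refine .inr ⟨?_, hP.subst _ _⟩
    rcases ih with rfl | ⟨hX, -⟩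
    exacts [hP.subst _ _, hX]

theorem isAtomic_left (h : Rewrites Θ X Y) (hY : Y.IsAtomic) : X.IsAtomic := by
  rcases h.eq_or_isAtomic with rfl | ⟨hX, -⟩
  exacts [hY, hX]

theorem exists_eq_equal (h : Rewrites Θ X Y) (hY : ∃ a b, Y = equal a b) :
    ∃ s r, X = equal s r := by
  induction h with
  | refl => exact hY
  | step _ _ _ _ _ _ ih => exact ih (exists_subst_eq_equal hY)

/-- Only equalities justify rewrites. -/
theorem of_cons {C : Fm L} (hC : ∀ s r, C ≠ equal s r) (h : Rewrites (C ::ₘ Θ) X Y) :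
    Rewrites Θ X Y := by
  induction h with
  | refl X => exact .refl X
  | @step _ _ E _ a b _ hP ha hb hE hEab ih ihE =>
    refine .step ih hP ha hb ((mem_cons.mp hE).resolve_left ?_) ihE
    rintro rfl
    obtain ⟨s, r, rfl⟩ := hEab.exists_eq_equal ⟨a, b, rfl⟩
    exact hC s r rfl

theorem freeVars_subset (h : Rewrites Θ X Y) : Y.freeVars ⊆ X.freeVars ∪ fvAtoms Θ := by
  induction h with
  | refl X => exact Set.subset_union_left
  | @step _ P E v a b _ hP _ _ hE hEab ih ihE =>
    have hE_fv : E.freeVars ⊆ fvAtoms Θ :=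
      freeVars_subset_fvAtoms hE (hEab.isAtomic_left (.equal a b))
    intro z hz
    rcases freeVars_subst_subset hP v a b hz with hz | hz
    · exact ih hz
    · exact .inr ((Set.union_subset hE_fv subset_rfl) (ihE (Or.inr hz)))

theorem derivable_cons (h : Rewrites Θ X Y) {Ω Ξ : Multiset (Fm L)} (hΩ : Θ ≤ Ω)
    (hY : Derivable (Y ::ₘ Ω) Ξ) : Derivable (X ::ₘ Ω) Ξ := by
  induction h generalizing Ω Ξ with
  | refl => exact hY
  | @step _ P E v a b _ hP ha hb hE hEab ih ihE =>
    obtain ⟨n, d⟩ := hY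
    have hab : (equal a b).freeVars ⊆ fvAtoms (P.subst v b ::ₘ Ω) := by
      refine hEab.freeVars_subset.trans (Set.union_subset ?_ ?_)
      · exact freeVars_subset_fvAtoms (mem_of_le (hΩ.trans (le_cons_self _ _)) hE)
          (hEab.isAtomic_left (.equal a b))
      · exact (fvAtoms_mono hΩ).trans fvAtoms_subset_cons
    have d' : DerC (ReplMinus L) (n + 1) (equal a b ::ₘ P.subst v a ::ₘ Ω) Ξ :=
      .repl ⟨a, b, v, P, Ω, hP, ha, hb, rfl, rfl⟩ (d.weaken hab)
    have hΩ' : Θ ≤ P.subst v a ::ₘ Ω := hΩ.trans (le_cons_self _ _)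
    obtain ⟨s, r, rfl⟩ := hEab.exists_eq_equal ⟨a, b, rfl⟩
    exact ih hΩ ((ihE hΩ' ⟨_, d'⟩).of_cons_equal (mem_of_le hΩ' hE))

theorem derivable_axiom (hX : X ∈ Θ) (h : Rewrites Θ X Y) (hY : Y.IsAtomic)
    (Δ : Multiset (Fm L)) : Derivable Θ (Y ::ₘ Δ) := by
  have ax : ∀ Ω, Derivable (Y ::ₘ Ω) (Y ::ₘ Δ) := fun _ => ⟨0, .ax hY⟩
  -- The copy of `X` that the replay adds is contracted if `X` is an equality; otherwise `X`
  -- justifies no rewrite and is set aside during the replay.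
  by_cases hXeq : ∃ s r, X = equal s r
  · obtain ⟨s, r, rfl⟩ := hXeq
    exact (h.derivable_cons le_rfl (ax Θ)).of_cons_equal hX
  · obtain ⟨Θ₀, rfl⟩ := exists_cons_of_mem hX
    exact (h.of_cons fun s r hs => hXeq ⟨s, r, hs⟩).derivable_cons le_rfl (ax Θ₀)

end Rewrites

/-- The members of `Θ'` correspond one-to-one to a part `M` of `Θ`, each rewriting to its partner;
the rest `K` of `Θ` consists of atoms to be contracted. The variable condition on partners carries
the eigenvariable conditions over from `Θ` to `Θ'`. -/
def Covers (Θ' Θ : Multiset (Fm L)) : Prop :=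
  ∃ M K : Multiset (Fm L), Θ = M + K ∧
    Rel (fun X Y => Rewrites Θ' X Y ∧ X.freeVars ⊆ Y.freeVars ∪ fvAtoms Θ) Θ' M ∧
    ∀ Y ∈ K, Y.IsAtomic ∧ ∃ X ∈ Θ', Rewrites Θ' X Y

namespace Covers

variable {Θ Θ' : Multiset (Fm L)}

theorem self (Θ : Multiset (Fm L)) : Covers Θ Θ :=
  ⟨Θ, 0, (add_zero Θ).symm,
    rel_refl_of_refl_on fun X _ => ⟨.refl X, Set.subset_union_left⟩, by simp⟩

theorem exists_rewrites (h : Covers Θ' Θ) {Y : Fm L} (hY : Y ∈ Θ) :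
    ∃ X ∈ Θ', Rewrites Θ' X Y := by
  obtain ⟨M, K, rfl, hM, hK⟩ := h
  rcases mem_add.mp hY with hY | hY
  · obtain ⟨X, hX, hXY, -⟩ := exists_mem_of_rel_of_mem (rel_flip.mpr hM) hY
    exact ⟨X, hX, hXY⟩
  · exact (hK Y hY).2

theorem notMem_freeVars (h : Covers Θ' Θ) {y : ℕ} (hy : ∀ C ∈ Θ, y ∉ C.freeVars) :
    ∀ X ∈ Θ', y ∉ X.freeVars := by
  obtain ⟨M, K, rfl, hM, -⟩ := h
  intro X hX hyX
  obtain ⟨Y, hY, -, hfv⟩ := exists_mem_of_rel_of_mem hM hX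
  rcases hfv hyX with hyY | hyA
  · exact hy Y (mem_add.mpr (.inl hY)) hyY
  · exact notMem_fvAtoms hy hyA

theorem cons_of_rewrites (h : Covers Θ' Θ) {X Y : Fm L} (hY : Y.IsAtomic) (hX : X ∈ Θ')
    (hXY : Rewrites Θ' X Y) : Covers Θ' (Y ::ₘ Θ) := by
  obtain ⟨M, K, rfl, hM, hK⟩ := h
  refine ⟨M, Y ::ₘ K, (add_cons _ _ _).symm, ?_, ?_⟩
  · exact hM.mono fun _ _ _ _ ⟨hrw, hfv⟩ =>
      ⟨hrw, hfv.trans (Set.union_subset_union_right _ fvAtoms_subset_cons)⟩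
  · exact forall_mem_cons.mpr ⟨⟨hY, X, hX, hXY⟩, hK⟩

theorem cons (h : Covers Θ' Θ) (C : Fm L) : Covers (C ::ₘ Θ') (C ::ₘ Θ) := by
  obtain ⟨M, K, rfl, hM, hK⟩ := h
  refine ⟨C ::ₘ M, K, (cons_add _ _ _).symm,
    .cons ⟨.refl C, Set.subset_union_left⟩ ?_, ?_⟩
  · exact hM.mono fun _ _ _ _ ⟨hrw, hfv⟩ => ⟨hrw.mono (le_cons_self _ _),
      hfv.trans (Set.union_subset_union_right _ fvAtoms_subset_cons)⟩
  · intro Y hY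
    obtain ⟨hYA, X, hX, hXY⟩ := hK Y hY
    exact ⟨hYA, X, mem_cons_of_mem hX, hXY.mono (le_cons_self _ _)⟩

theorem of_cons {G : Fm L} {Γ : Multiset (Fm L)} (hG : ¬ G.IsAtomic)
    (h : Covers Θ' (G ::ₘ Γ)) : ∃ Θ₀, Θ' = G ::ₘ Θ₀ ∧ Covers Θ₀ Γ := by
  obtain ⟨M, K, hMK, hM, hK⟩ := h
  have hGM : G ∈ M :=
    (mem_add.mp (hMK ▸ mem_cons_self G Γ)).resolve_right fun hGK => hG (hK G hGK).1
  obtain ⟨M₀, rfl⟩ := exists_cons_of_mem hGM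
  obtain ⟨X, Θ₀, ⟨hXG, -⟩, hM₀, rfl⟩ := rel_cons_right.mp hM
  obtain rfl : X = G := hXG.eq_or_isAtomic.resolve_right fun h => hG h.2
  have hGeq : ∀ s r, X ≠ equal s r := by rintro s r rfl; exact hG (.equal s r)
  refine ⟨Θ₀, rfl, M₀, K, (cons_inj_right X).mp (hMK.trans (cons_add _ _ _)), ?_, ?_⟩
  · refine hM₀.mono fun _ _ _ _ ⟨hrw, hfv⟩ => ⟨hrw.of_cons hGeq, ?_⟩
    rwa [fvAtoms_cons_of_not_isAtomic hG] at hfv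
  · intro Y hY
    obtain ⟨hYA, Z, hZ, hZY⟩ := hK Y hY
    refine ⟨hYA, Z, (mem_cons.mp hZ).resolve_left ?_, hZY.of_cons hGeq⟩
    rintro rfl
    exact hG (hZY.isAtomic_left hYA)

/-- The partner of `P[v/s]` rewrites further to `P[v/r]`, justified by the partner of `s = r`. -/
theorem replMinus {P : Fm L} {v : ℕ} {s r : L.Term ℕ} {Γ : Multiset (Fm L)} (hP : P.IsAtomic)
    (hs : tCount v s = 0) (hr : tCount v r = 0)
    (h : Covers Θ' (equal s r ::ₘ P.subst v s ::ₘ Γ)) :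
    Covers Θ' (equal s r ::ₘ P.subst v r ::ₘ Γ) := by
  obtain ⟨E, hE, hEsr⟩ := h.exists_rewrites (mem_cons_self _ _)
  have hstep : ∀ {X}, Rewrites Θ' X (P.subst v s) → Rewrites Θ' X (P.subst v r) :=
    fun hX => .step hX hP hs hr hE hEsr
  obtain ⟨M, K, hMK, hM, hK⟩ := h
  have hrel : Rel (fun X Y => Rewrites Θ' X Y ∧
      X.freeVars ⊆ Y.freeVars ∪ fvAtoms (equal s r ::ₘ P.subst v r ::ₘ Γ)) Θ' M :=
    hM.mono fun _ _ _ _ ⟨hrw, hfv⟩ =>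
      ⟨hrw, hfv.trans (Set.union_subset_union_right _ (fvAtoms_replMinus_subset hP))⟩
  rcases mem_add.mp (hMK ▸ mem_cons_of_mem (mem_cons_self _ _)) with hsM | hsK
  · obtain ⟨M₀, rfl⟩ := exists_cons_of_mem hsM
    obtain ⟨X, Θ₀, ⟨hX, hfv⟩, hM₀, rfl⟩ := rel_cons_right.mp hrel
    refine ⟨P.subst v r ::ₘ M₀, K, ?_, .cons ⟨hstep hX, ?_⟩ hM₀, hK⟩
    · rw [cons_add, cons_cons_eq_cons_iff] at hMK ⊢
      exact hMK
    · exact hfv.trans (Set.union_subset (freeVars_subst_subset_union_fvAtoms hP)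
        Set.subset_union_right)
  · obtain ⟨K₀, rfl⟩ := exists_cons_of_mem hsK
    refine ⟨M, P.subst v r ::ₘ K₀, ?_, hrel, ?_⟩
    · rw [add_cons, cons_cons_eq_cons_iff] at hMK ⊢
      exact hMK
    · obtain ⟨-, X, hX, hXs⟩ := hK _ (mem_cons_self _ _)
      exact forall_mem_cons.mpr ⟨⟨hP.subst v r, X, hX, hstep hXs⟩,
        fun Y hY => hK Y (mem_cons_of_mem hY)⟩

end Covers

theorem DerC.derivable_of_covers {n : ℕ} {Θ Θ' Δ : Multiset (Fm L)}
    (d : DerC (ReplMinus L) n Θ Δ) (h : Covers Θ' Θ) : Derivable Θ' Δ := by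
  induction d generalizing Θ' with
  | ax hP =>
    obtain ⟨X, hX, hXP⟩ := h.exists_rewrites (mem_cons_self _ _)
    exact hXP.derivable_axiom hX hP _
  | botL =>
    obtain ⟨X, hX, hXf⟩ := h.exists_rewrites (mem_cons_self _ _)
    obtain rfl : X = falsum := hXf.eq_or_isAtomic.resolve_right fun h => nomatch h.2
    obtain ⟨Θ₀, rfl⟩ := exists_cons_of_mem hX
    exact ⟨0, .botL⟩
  | @andL _ _ _ A B _ ih =>
    obtain ⟨Θ₀, rfl, h₀⟩ := h.of_cons (G := Fm.and A B) (nomatch ·)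
    obtain ⟨m, d⟩ := ih ((h₀.cons B).cons A)
    exact ⟨m + 1, .andL d⟩
  | andR _ _ ih₁ ih₂ =>
    obtain ⟨m₁, d₁⟩ := ih₁ h
    obtain ⟨m₂, d₂⟩ := ih₂ h
    exact ⟨max m₁ m₂ + 1, .andR (d₁.mono (le_max_left ..)) (d₂.mono (le_max_right ..))⟩
  | @orL _ _ _ A B _ _ ih₁ ih₂ =>
    obtain ⟨Θ₀, rfl, h₀⟩ := h.of_cons (G := Fm.or A B) (nomatch ·)
    obtain ⟨m₁, d₁⟩ := ih₁ (h₀.cons A)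
    obtain ⟨m₂, d₂⟩ := ih₂ (h₀.cons B)
    exact ⟨max m₁ m₂ + 1, .orL (d₁.mono (le_max_left ..)) (d₂.mono (le_max_right ..))⟩
  | orR _ ih =>
    obtain ⟨m, d⟩ := ih h
    exact ⟨m + 1, .orR d⟩
  | @impL _ _ _ A B _ _ ih₁ ih₂ =>
    obtain ⟨Θ₀, rfl, h₀⟩ := h.of_cons (G := Fm.imp A B) (nomatch ·)
    obtain ⟨m₁, d₁⟩ := ih₁ h₀
    obtain ⟨m₂, d₂⟩ := ih₂ (h₀.cons B)
    exact ⟨max m₁ m₂ + 1, .impL (d₁.mono (le_max_left ..)) (d₂.mono (le_max_right ..))⟩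
  | @impR _ _ _ A _ _ ih =>
    obtain ⟨m, d⟩ := ih (h.cons A)
    exact ⟨m + 1, .impR d⟩
  | @allL _ _ _ x t A hf _ ih =>
    obtain ⟨Θ₀, rfl, h₀⟩ := h.of_cons (G := Fm.all x A) (nomatch ·)
    obtain ⟨m, d⟩ := ih ((h₀.cons (Fm.all x A)).cons (A.subst x t))
    exact ⟨m + 1, .allL hf d⟩
  | allR hf hy hΓ hΔ _ ih =>
    obtain ⟨m, d⟩ := ih h
    exact ⟨m + 1, .allR hf hy (h.notMem_freeVars hΓ) hΔ d⟩
  | @exL _ _ _ x y A hf hy hΓ hΔ _ ih =>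
    obtain ⟨Θ₀, rfl, h₀⟩ := h.of_cons (G := Fm.ex x A) (nomatch ·)
    obtain ⟨m, d⟩ := ih (h₀.cons (A.subst x (Term.var y)))
    exact ⟨m + 1, .exL hf hy (h₀.notMem_freeVars hΓ) hΔ d⟩
  | exR hf _ ih =>
    obtain ⟨m, d⟩ := ih h
    exact ⟨m + 1, .exR hf d⟩
  | ref t _ ih =>
    obtain ⟨m, d⟩ := ih (h.cons (equal t t))
    exact ⟨m + 1, .ref t d⟩
  | repl hrp _ ih =>
    obtain ⟨s, r, v, P, Γ, hP, hs, hr, rfl, rfl⟩ := hrp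
    exact ih (h.replMinus hP hs hr)

/-- The rule Repl is admissible in `G3c^=⁻`: for atomic `P` and `v` not occurring in
`s`, `r`, if `s = r, P[v/s], P[v/r], Γ ⇒ Δ` is derivable then so is
`s = r, P[v/s], Γ ⇒ Δ`. -/
theorem repl_admissible_G3cEqMinus (L : FirstOrder.Language.{u, v})
    (P : Fm L) (hP : P.IsAtomic) (v : ℕ)
    (s r : L.Term ℕ) (hs : tCount v s = 0) (hr : tCount v r = 0)
    (Γ Δ : Multiset (Fm L))
    (hd : ∃ n, DerC (ReplMinus L) n
      (Fm.equal s r ::ₘ P.subst v s ::ₘ P.subst v r ::ₘ Γ) Δ) :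
    ∃ n, DerC (ReplMinus L) n (Fm.equal s r ::ₘ P.subst v s ::ₘ Γ) Δ := by
  obtain ⟨n, d⟩ := hd
  set Θ := Fm.equal s r ::ₘ P.subst v s ::ₘ Γ
  have hrw : Rewrites Θ (P.subst v s) (P.subst v r) :=
    .step (.refl _) hP hs hr (mem_cons_self _ _) (.refl _)
  have hcov : Covers Θ (P.subst v r ::ₘ Θ) :=
    (Covers.self Θ).cons_of_rewrites (hP.subst v r) (mem_cons_of_mem (mem_cons_self _ _)) hrw
  refine d.derivable_of_covers ?_
  rwa [cons_swap (P.subst v s), cons_swap (Fm.equal s r)]
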